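/- Let X be a Rician-power random variable with density f_X(x) = ((1+K)/Ω) exp(-K - x(1+K)/Ω) I₀(2√(K(1+K)x/Ω)) for x ≥ 0, and let Y be independent exponential with rate μ. Then the CDF of Z = X/Y is F_Z(z) = Γ₁ (Γ₂ + μ/z)^{-1} · ₁F₁(1; 1; Γ₄ (Γ₂ + μ/z)^{-1}), where Γ₁ = ((1+K)/Ω) e^{-K}, Γ₂ = (1+K)/Ω, and Γ₄ = K(1+K)/Ω. -/

import Mathlib

/-!
Since `Y > 0` almost surely, `X / Y ≤ z` iff `Y ≥ X / z`, so by independence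
`F_Z(z) = E[P(Y ≥ X / z | X)] = E[exp (-(μ / z) X)]`: the CDF is the Laplace transform of the
Rician power law at `s = μ / z`. Expanding `I₀(2√(Γ₄ x)) = ∑ (Γ₄ x)ᵏ / k!²` and integrating
termwise with `∫₀^∞ xᵏ e^{-a x} dx = k! / aᵏ⁺¹`, where `a = Γ₂ + s`, leaves
`Γ₁ a⁻¹ ∑ (Γ₄ / a)ᵏ / k! = Γ₁ a⁻¹ exp (Γ₄ / a)`.
-/

open MeasureTheory ProbabilityTheory

/-- The modified Bessel function of the first kind of order 0. -/
noncomputable def besselI0 (t : ℝ) : ℝ :=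
  ∑' k : ℕ, (t / 2) ^ (2 * k) / ((k.factorial : ℝ)) ^ 2

open Real Set Nat
open scoped ENNReal

lemma besselI0_two_mul_sqrt {u : ℝ} (hu : 0 ≤ u) :
    besselI0 (2 * √u) = ∑' k : ℕ, u ^ k / (k ! : ℝ) ^ 2 := by
  simp only [besselI0, mul_div_cancel_left₀ _ (two_ne_zero' ℝ), pow_mul, sq_sqrt hu]

lemma summable_pow_div_factorial_sq (u : ℝ) :
    Summable fun k : ℕ ↦ u ^ k / (k ! : ℝ) ^ 2 := by
  refine (summable_pow_div_factorial |u|).of_norm_bounded fun k ↦ ?_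
  have hk : (1 : ℝ) ≤ k ! := mod_cast k.factorial_pos
  rw [norm_div, norm_pow, norm_pow, Real.norm_eq_abs, Real.norm_natCast]
  gcongr
  nlinarith

@[fun_prop]
lemma measurable_besselI0 : Measurable besselI0 := by
  refine measurable_of_tendsto_metrizable
    (f := fun n t ↦ ∑ k ∈ Finset.range n, (t / 2) ^ (2 * k) / (k ! : ℝ) ^ 2) (fun n ↦ by fun_prop)
    (tendsto_pi_nhds.mpr fun t ↦ ?_)
  simp_rw [besselI0, pow_mul]
  exact (summable_pow_div_factorial_sq _).hasSum.tendsto_sum_nat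

lemma lintegral_Ioi_pow_mul_exp_neg_mul (k : ℕ) {a : ℝ} (ha : 0 < a) :
    ∫⁻ x in Ioi 0, ENNReal.ofReal (x ^ k * exp (-(a * x))) =
      ENNReal.ofReal (k ! / a ^ (k + 1)) := by
  have hrpow : ∀ x ∈ Ioi (0 : ℝ),
      x ^ ((k + 1 : ℝ) - 1) * exp (-(a * x)) = x ^ k * exp (-(a * x)) := fun x _ ↦ by
    rw [add_sub_cancel_right, rpow_natCast]
  have hint : IntegrableOn (fun x : ℝ ↦ x ^ k * exp (-(a * x))) (Ioi 0) := by
    refine (integrableOn_rpow_mul_exp_neg_mul_rpow (s := k) (p := 1)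
      (by linarith [k.cast_nonneg (α := ℝ)]) one_pos ha).congr_fun (fun x _ ↦ ?_)
      measurableSet_Ioi
    simp [rpow_natCast]
  rw [← ofReal_integral_eq_lintegral_ofReal hint
    ((ae_restrict_iff' measurableSet_Ioi).mpr (ae_of_all _ fun x (hx : 0 < x) ↦ by positivity)),
    ← setIntegral_congr_fun measurableSet_Ioi hrpow,
    integral_rpow_mul_exp_neg_mul_Ioi (by positivity) ha, Gamma_nat_eq_factorial, ← Nat.cast_succ,
    rpow_natCast, one_div_pow, one_div_mul_eq_div]

lemma lintegral_Ioi_exp_neg_mul_mul_besselI0 {a c : ℝ} (ha : 0 < a) (hc : 0 ≤ c) :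
    ∫⁻ x in Ioi 0, ENNReal.ofReal (exp (-(a * x)) * besselI0 (2 * √(c * x))) =
      ENNReal.ofReal (a⁻¹ * exp (c / a)) := by
  have hcoef : ∀ k : ℕ, 0 ≤ c ^ k / (k ! : ℝ) ^ 2 := fun k ↦ by positivity
  have hseries : ∀ x ∈ Ioi (0 : ℝ), ENNReal.ofReal (exp (-(a * x)) * besselI0 (2 * √(c * x))) =
      ∑' k : ℕ, ENNReal.ofReal (c ^ k / (k ! : ℝ) ^ 2) *
        ENNReal.ofReal (x ^ k * exp (-(a * x))) := by
    intro x (hx : 0 < x)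
    rw [besselI0_two_mul_sqrt (by positivity), ← tsum_mul_left,
      ENNReal.ofReal_tsum_of_nonneg (fun k ↦ by positivity)
        ((summable_pow_div_factorial_sq _).mul_left _)]
    refine tsum_congr fun k ↦ ?_
    rw [← ENNReal.ofReal_mul (hcoef k)]
    congr 1
    ring
  have hterm : ∀ k : ℕ,
      ENNReal.ofReal (c ^ k / (k ! : ℝ) ^ 2) * ENNReal.ofReal (k ! / a ^ (k + 1)) =
        ENNReal.ofReal (a⁻¹ * ((c / a) ^ k / k !)) := by
    intro k
    rw [← ENNReal.ofReal_mul (hcoef k)]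
    congr 1
    rw [div_pow]
    field_simp
    ring
  rw [setLIntegral_congr_fun measurableSet_Ioi hseries,
    lintegral_tsum fun k ↦ (by fun_prop : Measurable _).aemeasurable]
  have hmeas : ∀ k : ℕ, Measurable fun x : ℝ ↦ ENNReal.ofReal (x ^ k * exp (-(a * x))) :=
    fun k ↦ by fun_prop
  simp_rw [lintegral_const_mul _ (hmeas _), lintegral_Ioi_pow_mul_exp_neg_mul _ ha, hterm]
  rw [← ENNReal.ofReal_tsum_of_nonneg (fun k ↦ by positivity)
      ((summable_pow_div_factorial _).mul_left _), tsum_mul_left,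
    Real.exp_eq_exp_ℝ, NormedSpace.exp_eq_tsum_div]

/-- Density of the received power `|h|²` of a Rician fading channel with `K`-factor `K` and
mean power `Ω`. -/
noncomputable def ricePowerPDF (K Ω x : ℝ) : ℝ≥0∞ :=
  if 0 ≤ x then
    ENNReal.ofReal ((1 + K) / Ω * exp (-K - x * (1 + K) / Ω) *
      besselI0 (2 * √(K * (1 + K) * x / Ω)))
  else 0

lemma measurable_ricePowerPDF (K Ω : ℝ) : Measurable (ricePowerPDF K Ω) :=
  Measurable.ite measurableSet_Ici (by fun_prop) measurable_const

lemma lintegral_ricePowerPDF_mul_exp_neg_mul {K Ω s : ℝ} (hK : 0 ≤ K) (hΩ : 0 < Ω)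
    (hs : 0 < (1 + K) / Ω + s) :
    ∫⁻ x, ricePowerPDF K Ω x * ENNReal.ofReal (exp (-(s * x))) =
      ENNReal.ofReal ((1 + K) / Ω * exp (-K) * ((1 + K) / Ω + s)⁻¹ *
        exp (K * (1 + K) / Ω * ((1 + K) / Ω + s)⁻¹)) := by
  have hpos : 0 ≤ (1 + K) / Ω * exp (-K) := by positivity
  have hfactor : (fun x ↦ ricePowerPDF K Ω x * ENNReal.ofReal (exp (-(s * x)))) =
      (Ici 0).indicator fun x ↦ ENNReal.ofReal ((1 + K) / Ω * exp (-K)) *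
        ENNReal.ofReal (exp (-(((1 + K) / Ω + s) * x)) *
          besselI0 (2 * √(K * (1 + K) / Ω * x))) := by
    ext x
    by_cases hx : 0 ≤ x
    · have hΩx : K * (1 + K) * x / Ω = K * (1 + K) / Ω * x := by ring
      have hexp : exp (-K - x * (1 + K) / Ω) * exp (-(s * x)) =
          exp (-K) * exp (-(((1 + K) / Ω + s) * x)) := by
        rw [← exp_add, ← exp_add]
        ring_nf
      rw [indicator_of_mem (mem_Ici.mpr hx), ricePowerPDF, if_pos hx, hΩx,
        ← ENNReal.ofReal_mul' (exp_nonneg _), ← ENNReal.ofReal_mul hpos]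
      congr 1
      linear_combination (1 + K) / Ω * besselI0 (2 * √(K * (1 + K) / Ω * x)) * hexp
    · rw [indicator_of_notMem (by simpa using hx), ricePowerPDF, if_neg hx, zero_mul]
  rw [hfactor, lintegral_indicator measurableSet_Ici, ← setLIntegral_congr Ioi_ae_eq_Ici,
    lintegral_const_mul _ (by fun_prop), lintegral_Ioi_exp_neg_mul_mul_besselI0 hs (by positivity),
    ← ENNReal.ofReal_mul hpos, div_eq_mul_inv _ ((1 + K) / Ω + s)]
  congr 1
  ring

lemma ae_pos_expMeasure {r : ℝ} (hr : 0 < r) : ∀ᵐ x ∂expMeasure r, 0 < x := by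
  have := isProbabilityMeasure_expMeasure hr
  rw [ae_iff]
  change expMeasure r (Ioi 0)ᶜ = 0
  rw [compl_Ioi, ← ofReal_cdf, cdf_expMeasure_eq hr, if_pos le_rfl, mul_zero, neg_zero, exp_zero,
    sub_self, ENNReal.ofReal_zero]

lemma expMeasure_Ici {r t : ℝ} (hr : 0 < r) (ht : 0 ≤ t) :
    expMeasure r (Ici t) = ENNReal.ofReal (exp (-(r * t))) := by
  have := isProbabilityMeasure_expMeasure hr
  have hatom : expMeasure r {t} = 0 :=
    withDensity_absolutelyContinuous _ _ Real.volume_singleton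
  have hle : exp (-(r * t)) ≤ 1 := exp_le_one_iff.mpr (by nlinarith)
  rw [← measure_congr (Ioi_ae_eq_Ici' hatom), ← compl_Iic,
    prob_compl_eq_one_sub measurableSet_Iic, ← ofReal_cdf, cdf_expMeasure_eq hr, if_pos ht,
    ← ENNReal.ofReal_one, ← ENNReal.ofReal_sub _ (sub_nonneg.mpr hle), sub_sub_cancel]

lemma map_eq_expMeasure_of_cdf {α : Type*} [MeasurableSpace α] {P : Measure α}
    [IsProbabilityMeasure P] {Y : α → ℝ} (hY : Measurable Y) {r : ℝ} (hr : 0 < r)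
    (hcdf : ∀ y : ℝ, 0 ≤ y → (P {ω | Y ω ≤ y}).toReal = 1 - exp (-r * y)) :
    P.map Y = expMeasure r := by
  have := isProbabilityMeasure_expMeasure hr
  have := Measure.isProbabilityMeasure_map (μ := P) hY.aemeasurable
  refine Measure.eq_of_cdf _ _ (StieltjesFunction.ext fun y ↦ ?_)
  rw [cdf_expMeasure_eq hr, cdf_eq_real, map_measureReal_apply hY measurableSet_Iic,
    measureReal_def]
  split_ifs with hy
  · rw [← neg_mul]
    exact hcdf y hy
  · have hzero := hcdf 0 le_rfl
    rw [mul_zero, exp_zero, sub_self] at hzero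
    refine le_antisymm ?_ ENNReal.toReal_nonneg
    rw [← hzero]
    exact ENNReal.toReal_mono (measure_ne_top _ _)
      (measure_mono fun ω (hω : Y ω ≤ y) ↦ show Y ω ≤ 0 by linarith)

lemma measure_div_le_eq_lintegral_map {α : Type*} [MeasurableSpace α] {P : Measure α}
    [IsFiniteMeasure P] {X Y : α → ℝ} (hX : Measurable X) (hY : Measurable Y)
    (hXY : IndepFun X Y P) (hYpos : ∀ᵐ ω ∂P, 0 < Y ω) {z : ℝ} (hz : 0 < z) :
    P {ω | X ω / Y ω ≤ z} = ∫⁻ x, P.map Y (Ici (x / z)) ∂P.map X := by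
  have hS : MeasurableSet {p : ℝ × ℝ | p.1 / z ≤ p.2} :=
    measurableSet_le (by fun_prop) measurable_snd
  have hevent : {ω | X ω / Y ω ≤ z} =ᵐ[P] (fun ω ↦ (X ω, Y ω)) ⁻¹' {p | p.1 / z ≤ p.2} := by
    refine Filter.eventuallyEq_set.mpr (hYpos.mono fun ω hω ↦ ?_)
    change X ω / Y ω ≤ z ↔ X ω / z ≤ Y ω
    rw [div_le_iff₀ hω, div_le_iff₀ hz, mul_comm]
  rw [measure_congr hevent, ← Measure.map_apply (hX.prodMk hY) hS,
    (indepFun_iff_map_prod_eq_prod_map_map hX.aemeasurable hY.aemeasurable).mp hXY,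
    Measure.prod_apply hS]
  rfl

/-- For `X` Rician-power distributed and `Y` independent exponential with rate `μ`,
the CDF of `Z = X/Y` is `Γ₁ (Γ₂ + μ/z)⁻¹ ₁F₁(1;1;Γ₄(Γ₂+μ/z)⁻¹)` (with `₁F₁(1;1;t) = eᵗ`). -/
theorem stmt_3 {Ω : Type*} [MeasurableSpace Ω] (P : Measure Ω) [IsProbabilityMeasure P]
    (X Y : Ω → ℝ) (hX : Measurable X) (hY : Measurable Y)
    (K Ω_X μ : ℝ) (hK : 0 ≤ K) (hΩ : 0 < Ω_X) (hμ : 0 < μ)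
    (hInd : IndepFun X Y P)
    (hXd : Measure.map X P = volume.withDensity (fun x =>
      if 0 ≤ x then
        ENNReal.ofReal (((1 + K) / Ω_X) * Real.exp (-K - x * (1 + K) / Ω_X) *
          besselI0 (2 * Real.sqrt (K * (1 + K) * x / Ω_X)))
      else 0))
    (hYd : ∀ y : ℝ, 0 ≤ y → (P {ω | Y ω ≤ y}).toReal = 1 - Real.exp (-μ * y))
    (z : ℝ) (hz : 0 < z) :
    (P {ω | X ω / Y ω ≤ z}).toReal =
      (((1 + K) / Ω_X) * Real.exp (-K)) * ((1 + K) / Ω_X + μ / z)⁻¹ *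
        Real.exp ((K * (1 + K) / Ω_X) * ((1 + K) / Ω_X + μ / z)⁻¹) := by
  have hXlaw : P.map X = volume.withDensity (ricePowerPDF K Ω_X) := hXd
  have hYlaw : P.map Y = expMeasure μ := map_eq_expMeasure_of_cdf hY hμ hYd
  have hYpos : ∀ᵐ ω ∂P, 0 < Y ω :=
    ae_of_ae_map hY.aemeasurable (hYlaw ▸ ae_pos_expMeasure hμ)
  have htail_meas : Measurable fun x ↦ expMeasure μ (Ici (x / z)) :=
    Antitone.measurable fun x x' hxx' ↦ measure_mono (Ici_subset_Ici.mpr (by gcongr))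
  have htail : ∀ x, ricePowerPDF K Ω_X x * expMeasure μ (Ici (x / z)) =
      ricePowerPDF K Ω_X x * ENNReal.ofReal (exp (-(μ / z * x))) := by
    intro x
    by_cases hx : 0 ≤ x
    · rw [expMeasure_Ici hμ (by positivity), mul_div_assoc', div_mul_eq_mul_div]
    · rw [ricePowerPDF, if_neg hx, zero_mul, zero_mul]
  rw [measure_div_le_eq_lintegral_map hX hY hInd hYpos hz, hYlaw, hXlaw,
    lintegral_withDensity_eq_lintegral_mul _ (measurable_ricePowerPDF K Ω_X) htail_meas]
  simp_rw [Pi.mul_apply, htail]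
  rw [lintegral_ricePowerPDF_mul_exp_neg_mul hK hΩ (by positivity),
    ENNReal.toReal_ofReal (by positivity)]
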